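/- arXiv:2211.00473 — 2 statements merged into one kernel-verified Lean document; each statement's English description precedes it below -/
import Mathlib

section
/- Let T ∈ ℝ, let (X, μ) be a measure space, let ψ : X → ℝ be measurable with ψ(x) < −T for all x ∈ X, and let G : X → [0, +∞] be measurable. Let c be a positive Lebesgue-measurable function on (T, +∞) such that c(t)e^{−t} is decreasing with respect to t, and let K ∈ [0, +∞). Suppose that for all t₂, t₁ with T ≤ t₂ < t₁ < +∞ one has ∫_{{x : −t₁ ≤ ψ(x) < −t₂}} G·c(−ψ) dμ = K·∫_{t₂}^{t₁} c(s)e^{−s} ds. Then for every nonnegative Lebesgue-measurable function a on (T, +∞) and all t₂, t₁ with T ≤ t₂ < t₁ ≤ +∞ one has ∫_{{x : −t₁ ≤ ψ(x) < −t₂}} G·a(−ψ) dμ = K·∫_{t₂}^{t₁} a(s)e^{−s} ds, where for t₁ = +∞ the set {−t₁ ≤ ψ < −t₂} is understood as {ψ < −t₂}. -/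
/-!
Push the measure `G μ` forward along `-ψ` to a measure `m` on `(T, ∞)`. The hypothesis says
that `c • m` and `c • K e^{-s} ds` agree on half-open intervals; both are finite on intervals
`(p, q]` with `p > T` because `c(s)e^{-s}` is decreasing, so the two measures coincide, and
dividing by `c > 0` gives `m = K e^{-s} ds` on `(T, ∞)`. Integrating `a` against both sides
gives the claim.
-/

open MeasureTheory ENNReal Set

namespace MeasureTheory

theorem Measure.ext_of_Ioc_of_ae_gt {α : Type*} [TopologicalSpace α] [MeasurableSpace α]
    [SecondCountableTopology α] [LinearOrder α] [OrderTopology α] [BorelSpace α] [NoMinOrder α]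
    [DenselyOrdered α] [NoMaxOrder α] {μ ν : Measure α} {T : α} (hμ : ∀ᵐ x ∂μ, T < x)
    (hν : ∀ᵐ x ∂ν, T < x) (hfin : ∀ ⦃p q⦄, T < p → p < q → μ (Ioc p q) ≠ ∞)
    (heq : ∀ ⦃p q⦄, T < p → p < q → μ (Ioc p q) = ν (Ioc p q)) : μ = ν := by
  have restrict_Ioi : ∀ p, T < p → μ.restrict (Ioi p) = ν.restrict (Ioi p) := by
    intro p hp
    have hIoc : ∀ a b, Ioc a b ∩ Ioi p = Ioc (max a p) b := fun a b => by
      ext; simp only [mem_inter_iff, mem_Ioc, mem_Ioi, max_lt_iff]; tauto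
    have hT : ∀ a, T < max a p := fun a => hp.trans_le (le_max_right a p)
    refine ext_of_Ioc' _ _ (fun a b _ => ?_) (fun a b _ => ?_) <;>
      simp only [restrict_apply measurableSet_Ioc, hIoc] <;>
      rcases lt_or_ge (max a p) b with h | h
    · exact hfin (hT a) h
    · simp [Ioc_eq_empty_of_le h]
    · exact heq (hT a) h
    · simp [Ioc_eq_empty_of_le h]
  obtain ⟨u, hu_anti, hTu, hu⟩ := exists_seq_strictAnti_tendsto T
  rw [← restrict_eq_self_of_ae_mem (s := Ioi T) hμ,
    ← restrict_eq_self_of_ae_mem (s := Ioi T) hν,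
    ← (isGLB_of_tendsto_atTop hu_anti.antitone hu).iUnion_Ioi_eq, restrict_iUnion_congr]
  exact fun n => restrict_Ioi _ (hTu n)

theorem Measure.eq_of_withDensity_eq {α : Type*} [MeasurableSpace α]
    {μ ν : Measure α} {f : α → ℝ≥0∞} (hf : Measurable f) (hμf : ∀ᵐ x ∂μ, f x ≠ 0)
    (hνf : ∀ᵐ x ∂ν, f x ≠ 0) (hf_top : ∀ x, f x ≠ ∞)
    (h : μ.withDensity f = ν.withDensity f) : μ = ν := by
  rw [← withDensity_inv_same hf hμf (ae_of_all _ hf_top), h,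
    withDensity_inv_same hf hνf (ae_of_all _ hf_top)]

theorem setLIntegral_map_withDensity {X Y : Type*} [MeasurableSpace X] [MeasurableSpace Y]
    {μ : Measure X} {φ : X → Y} {G : X → ℝ≥0∞} {f : Y → ℝ≥0∞} {S : Set Y}
    (hφ : Measurable φ) (hG : Measurable G) (hf : Measurable f) (hS : MeasurableSet S) :
    ∫⁻ y in S, f y ∂(μ.withDensity G).map φ = ∫⁻ x in φ ⁻¹' S, G x * f (φ x) ∂μ := by
  rw [setLIntegral_map hS hf hφ]
  exact setLIntegral_withDensity_eq_setLIntegral_mul _ hG (hf.comp hφ) (hφ hS)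

end MeasureTheory

theorem AntitoneOn.setLIntegral_Ioc_ofReal_ne_top {μ : Measure ℝ} [IsFiniteMeasureOnCompacts μ]
    {g : ℝ → ℝ} {T p : ℝ} (hg : AntitoneOn g (Ioi T)) (hp : T < p) (q : ℝ) :
    ∫⁻ s in Ioc p q, ENNReal.ofReal (g s) ∂μ ≠ ∞ :=
  (((hg.mono fun _ hs => hp.trans_le hs.1).integrableOn_isCompact isCompact_Icc).mono_set
    Ioc_subset_Icc_self).lintegral_lt_top.ne

theorem preimage_neg_Ioc {X : Type*} (ψ : X → ℝ) (t₂ t₁ : ℝ) :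
    (fun x => -ψ x) ⁻¹' Ioc t₂ t₁ = {x | -t₁ ≤ ψ x ∧ ψ x < -t₂} := by
  ext; simp only [mem_preimage, mem_Ioc, mem_ofPred, lt_neg, neg_le, and_comm]

theorem preimage_neg_Ioi {X : Type*} (ψ : X → ℝ) (t : ℝ) :
    (fun x => -ψ x) ⁻¹' Ioi t = {x | ψ x < -t} := by
  ext; simp only [mem_preimage, mem_Ioi, mem_ofPred, lt_neg]

noncomputable def expTailMeasure (K : ℝ≥0∞) (T : ℝ) : Measure ℝ :=
  (K • volume.withDensity fun s => ENNReal.ofReal (Real.exp (-s))).restrict (Ioi T)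

theorem ae_gt_expTailMeasure (K : ℝ≥0∞) (T : ℝ) : ∀ᵐ s ∂expTailMeasure K T, T < s :=
  ae_restrict_mem measurableSet_Ioi

theorem setLIntegral_expTailMeasure {K : ℝ≥0∞} {T : ℝ} {b : ℝ → ℝ} {S : Set ℝ}
    (hb : Measurable b) (hS : MeasurableSet S) (hST : S ⊆ Ioi T) :
    ∫⁻ s in S, ENNReal.ofReal (b s) ∂expTailMeasure K T
      = K * ∫⁻ s in S, ENNReal.ofReal (b s * Real.exp (-s)) := by
  rw [expTailMeasure, Measure.restrict_restrict_of_subset hST, Measure.restrict_smul,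
    lintegral_smul_measure, smul_eq_mul,
    setLIntegral_withDensity_eq_setLIntegral_mul _ (by fun_prop) (by fun_prop) hS]
  simp only [Pi.mul_apply, ← ENNReal.ofReal_mul (Real.exp_pos _).le, mul_comm]

theorem map_withDensity_eq_expTailMeasure {X : Type*} [MeasurableSpace X] {μ : Measure X}
    {T : ℝ} {ψ : X → ℝ} (hψ_meas : Measurable ψ) (hψ : ∀ x, ψ x < -T)
    {G : X → ℝ≥0∞} (hG : Measurable G) {c : ℝ → ℝ} (hc_meas : Measurable c)
    (hc_pos : ∀ t ∈ Ioi T, 0 < c t) (hc_dec : AntitoneOn (fun t => c t * Real.exp (-t)) (Ioi T))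
    {K : ℝ≥0∞} (hK : K ≠ ⊤)
    (hyp : ∀ t₂ t₁ : ℝ, T ≤ t₂ → t₂ < t₁ →
      ∫⁻ x in {x | -t₁ ≤ ψ x ∧ ψ x < -t₂}, G x * ENNReal.ofReal (c (-ψ x)) ∂μ
        = K * ∫⁻ s in Ioc t₂ t₁, ENNReal.ofReal (c s * Real.exp (-s))) :
    (μ.withDensity G).map (fun x => -ψ x) = expTailMeasure K T := by
  have hφ : Measurable fun x => -ψ x := hψ_meas.neg
  have hm : ∀ᵐ s ∂(μ.withDensity G).map fun x => -ψ x, T < s :=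
    (ae_map_iff hφ.aemeasurable measurableSet_Ioi).2
      (ae_of_all _ fun x => lt_neg_of_lt_neg (hψ x))
  have hc : Measurable fun s => ENNReal.ofReal (c s) := by fun_prop
  have hc_ne_zero : ∀ s, T < s → ENNReal.ofReal (c s) ≠ 0 := fun s hs =>
    (ENNReal.ofReal_pos.2 (hc_pos s hs)).ne'
  refine Measure.eq_of_withDensity_eq hc (hm.mono hc_ne_zero)
    ((ae_gt_expTailMeasure K T).mono hc_ne_zero) (fun _ => ENNReal.ofReal_ne_top) ?_
  refine (Measure.ext_of_Ioc_of_ae_gt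
    (withDensity_absolutelyContinuous _ _ (ae_gt_expTailMeasure K T))
    (withDensity_absolutelyContinuous _ _ hm) (fun p q hp _ => ?_) (fun p q hp hpq => ?_)).symm
  all_goals
    rw [withDensity_apply _ measurableSet_Ioc,
      setLIntegral_expTailMeasure hc_meas measurableSet_Ioc fun s hs => hp.trans hs.1]
  · exact ENNReal.mul_ne_top hK (hc_dec.setLIntegral_Ioc_ofReal_ne_top hp q)
  · rw [withDensity_apply _ measurableSet_Ioc,
      setLIntegral_map_withDensity hφ hG hc measurableSet_Ioc, preimage_neg_Ioc, hyp p q hp.le hpq]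

/-- If the `c`-weighted integrals of `G` over all sublevel annuli
`{-t₁ ≤ ψ < -t₂}` of `ψ` are proportional to `∫_{t₂}^{t₁} c(s)e^{-s} ds`
(with constant of proportionality `K < +∞`), then the same proportionality
holds for every nonnegative measurable gain `a` in place of `c`, including
`t₁ = +∞`. -/
theorem annuli_proportionality_transfer
    {X : Type*} [MeasurableSpace X] (μ : Measure X) (T : ℝ)
    (ψ : X → ℝ) (hψ_meas : Measurable ψ) (hψ : ∀ x, ψ x < -T)
    (G : X → ℝ≥0∞) (hG : Measurable G)
    (c : ℝ → ℝ) (hc_meas : Measurable c)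
    (hc_pos : ∀ t ∈ Set.Ioi T, 0 < c t)
    (hc_dec : AntitoneOn (fun t => c t * Real.exp (-t)) (Set.Ioi T))
    (K : ℝ≥0∞) (hK : K ≠ ⊤)
    (hyp : ∀ t₂ t₁ : ℝ, T ≤ t₂ → t₂ < t₁ →
      ∫⁻ x in {x | -t₁ ≤ ψ x ∧ ψ x < -t₂}, G x * ENNReal.ofReal (c (-ψ x)) ∂μ
        = K * ∫⁻ s in Set.Ioc t₂ t₁, ENNReal.ofReal (c s * Real.exp (-s))) :
    ∀ a : ℝ → ℝ, Measurable a → (∀ s ∈ Set.Ioi T, 0 ≤ a s) →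
      (∀ t₂ t₁ : ℝ, T ≤ t₂ → t₂ < t₁ →
        ∫⁻ x in {x | -t₁ ≤ ψ x ∧ ψ x < -t₂}, G x * ENNReal.ofReal (a (-ψ x)) ∂μ
          = K * ∫⁻ s in Set.Ioc t₂ t₁, ENNReal.ofReal (a s * Real.exp (-s))) ∧
      (∀ t₂ : ℝ, T ≤ t₂ →
        ∫⁻ x in {x | ψ x < -t₂}, G x * ENNReal.ofReal (a (-ψ x)) ∂μ
          = K * ∫⁻ s in Set.Ioi t₂, ENNReal.ofReal (a s * Real.exp (-s))) := by
  intro a ha _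
  have hm := map_withDensity_eq_expTailMeasure hψ_meas hψ hG hc_meas hc_pos hc_dec hK hyp
  have transfer : ∀ S, MeasurableSet S → S ⊆ Ioi T →
      ∫⁻ x in (fun x => -ψ x) ⁻¹' S, G x * ENNReal.ofReal (a (-ψ x)) ∂μ
        = K * ∫⁻ s in S, ENNReal.ofReal (a s * Real.exp (-s)) := fun S hS hST => by
    rw [← setLIntegral_map_withDensity (φ := fun x => -ψ x) (f := fun s => ENNReal.ofReal (a s))
      hψ_meas.neg hG (by fun_prop) hS, hm, setLIntegral_expTailMeasure ha hS hST]
  refine ⟨fun t₂ t₁ ht₂ _ => ?_, fun t₂ ht₂ => ?_⟩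
  · rw [← preimage_neg_Ioc]
    exact transfer _ measurableSet_Ioc fun s hs => ht₂.trans_lt hs.1
  · rw [← preimage_neg_Ioi]
    exact transfer _ measurableSet_Ioi fun s hs => ht₂.trans_lt hs
end

section
/- Let T ∈ ℝ, let (X, μ) be a measure space, let ψ : X → ℝ be measurable with ψ(x) < −T for all x ∈ X, and let G, H, D : X → [0, +∞] be measurable. Let c be a positive Lebesgue-measurable function on (T, +∞) such that c(t)e^{−t} is decreasing with respect to t. Assume: (i) ∫_X H·c(−ψ) dμ < +∞; (ii) ∫_{{x : −ψ(x) ∈ A}} G dμ = 0 for every Lebesgue-null Borel set A ⊆ (T, +∞); (iii) for all t₂, t₁ with T ≤ t₂ < t₁ < +∞, ∫_{{−t₁ ≤ ψ < −t₂}} H·c(−ψ) dμ = ∫_{{−t₁ ≤ ψ < −t₂}} G·c(−ψ) dμ + ∫_{{−t₁ ≤ ψ < −t₂}} D·c(−ψ) dμ. Then for every nonnegative Lebesgue-measurable function c̃ on (T, +∞) one has ∫_X H·c̃(−ψ) dμ ≥ ∫_X G·c̃(−ψ) dμ. -/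
open MeasureTheory ENNReal

/-- Measure-theoretic core of Remark 1.6: if `H`, `G`, `D` satisfy the
Pythagoras-type identity `∫ H·c(-ψ) = ∫ G·c(-ψ) + ∫ D·c(-ψ)` over every
sublevel annulus of `ψ`, `∫ H·c(-ψ) < +∞`, and `G` gives no mass to
Lebesgue-null level sets of `-ψ`, then `∫ H·c̃(-ψ) ≥ ∫ G·c̃(-ψ)` for every
nonnegative measurable gain `c̃`. -/
theorem pythagoras_identity_gain_transfer
    {X : Type*} [MeasurableSpace X] (μ : Measure X) (T : ℝ)
    (ψ : X → ℝ) (hψ_meas : Measurable ψ) (hψ : ∀ x, ψ x < -T)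
    (G H D : X → ℝ≥0∞) (hG : Measurable G) (hH : Measurable H) (hD : Measurable D)
    (c : ℝ → ℝ) (hc_meas : Measurable c)
    (hc_pos : ∀ t ∈ Set.Ioi T, 0 < c t)
    (hc_dec : AntitoneOn (fun t => c t * Real.exp (-t)) (Set.Ioi T))
    (hHfin : (∫⁻ x, H x * ENNReal.ofReal (c (-ψ x)) ∂μ) < ⊤)
    (hGnull : ∀ A : Set ℝ, MeasurableSet A → A ⊆ Set.Ioi T →
      MeasureTheory.volume A = 0 → ∫⁻ x in {x | -ψ x ∈ A}, G x ∂μ = 0)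
    (hPyth : ∀ t₂ t₁ : ℝ, T ≤ t₂ → t₂ < t₁ →
      ∫⁻ x in {x | -t₁ ≤ ψ x ∧ ψ x < -t₂}, H x * ENNReal.ofReal (c (-ψ x)) ∂μ
        = (∫⁻ x in {x | -t₁ ≤ ψ x ∧ ψ x < -t₂},
            G x * ENNReal.ofReal (c (-ψ x)) ∂μ)
          + ∫⁻ x in {x | -t₁ ≤ ψ x ∧ ψ x < -t₂},
              D x * ENNReal.ofReal (c (-ψ x)) ∂μ) :
    ∀ ctilde : ℝ → ℝ, Measurable ctilde → (∀ s ∈ Set.Ioi T, 0 ≤ ctilde s) →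
      (∫⁻ x, G x * ENNReal.ofReal (ctilde (-ψ x)) ∂μ)
        ≤ ∫⁻ x, H x * ENNReal.ofReal (ctilde (-ψ x)) ∂μ := by
  intro ctilde hct_meas _hct_nonneg
  -- pushforward measures on ℝ
  set w : (X → ℝ≥0∞) → (X → ℝ≥0∞) := fun F x => F x * ENNReal.ofReal (c (-ψ x)) with hw
  have hwmeas : ∀ F : X → ℝ≥0∞, Measurable F → Measurable (w F) := fun F hF =>
    hF.mul (ENNReal.measurable_ofReal.comp (hc_meas.comp hψ_meas.neg))
  set m : (X → ℝ≥0∞) → Measure ℝ := fun F =>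
    Measure.map (fun x => -ψ x) (μ.withDensity (w F)) with hm
  have hnegψ : Measurable fun x => -ψ x := hψ_meas.neg
  have happly : ∀ (F : X → ℝ≥0∞), ∀ A : Set ℝ, MeasurableSet A →
      m F A = ∫⁻ x in (fun x => -ψ x) ⁻¹' A, w F x ∂μ := by
    intro F A hA
    rw [hm, Measure.map_apply hnegψ hA, withDensity_apply _ (hnegψ hA)]
  -- the annulus sets of hPyth are the preimages of Ioc
  have hpre : ∀ t₂ t₁ : ℝ, (fun x => -ψ x) ⁻¹' Set.Ioc t₂ t₁
      = {x | -t₁ ≤ ψ x ∧ ψ x < -t₂} := by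
    intro t₂ t₁
    ext x
    simp only [Set.mem_preimage, Set.mem_Ioc, Set.mem_setOf_eq]
    constructor
    · rintro ⟨h1, h2⟩; exact ⟨by linarith, by linarith⟩
    · rintro ⟨h1, h2⟩; exact ⟨by linarith, by linarith⟩
  -- total finiteness of m H on Ioc's
  have hHuniv : m H Set.univ = ∫⁻ x, w H x ∂μ := by
    rw [happly H Set.univ MeasurableSet.univ, Set.preimage_univ, setLIntegral_univ]
  -- m H = m G + m D
  have hext : m H = m G + m D := by
    refine Measure.ext_of_Ioc' (m H) (m G + m D) (fun a b _ => ?_) (fun a b hab => ?_)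
    · exact ((measure_mono (Set.subset_univ _)).trans_lt (hHuniv ▸ hHfin)).ne
    · have hIoc : ∀ F : X → ℝ≥0∞, Measurable F →
          m F (Set.Ioc a b) = m F (Set.Ioc (max a T) b) := by
        intro F hF
        have hset : (fun x => -ψ x) ⁻¹' Set.Ioc a b
            = (fun x => -ψ x) ⁻¹' Set.Ioc (max a T) b := by
          ext x
          have hx : T < -ψ x := by have := hψ x; linarith
          simp only [Set.mem_preimage, Set.mem_Ioc, max_lt_iff]
          constructor
          · rintro ⟨h1, h2⟩; exact ⟨⟨h1, hx⟩, h2⟩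
          · rintro ⟨h1, h2⟩; exact ⟨h1.1, h2⟩
        rw [happly F _ measurableSet_Ioc, happly F _ measurableSet_Ioc, hset]
      rw [Measure.add_apply, hIoc H hH, hIoc G hG, hIoc D hD]
      by_cases hb : max a T < b
      · rw [happly H _ measurableSet_Ioc, happly G _ measurableSet_Ioc,
          happly D _ measurableSet_Ioc]
        simp only [hpre]
        exact hPyth (max a T) b (le_max_right a T) hb
      · rw [Set.Ioc_eq_empty hb]
        rw [happly H _ MeasurableSet.empty, happly G _ MeasurableSet.empty,
          happly D _ MeasurableSet.empty]
        simp
  have hle : m G ≤ m H := by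
    rw [hext]; exact Measure.le_add_right le_rfl
  -- transfer through the gain function f = c̃ / c
  set f : ℝ → ℝ≥0∞ := fun s => ENNReal.ofReal (ctilde s) / ENNReal.ofReal (c s) with hf
  have hfmeas : Measurable f :=
    (ENNReal.measurable_ofReal.comp hct_meas).div (ENNReal.measurable_ofReal.comp hc_meas)
  have hlint : ∀ F : X → ℝ≥0∞, Measurable F →
      ∫⁻ s, f s ∂(m F) = ∫⁻ x, F x * ENNReal.ofReal (ctilde (-ψ x)) ∂μ := by
    intro F hF
    rw [hm, lintegral_map hfmeas hnegψ,
      lintegral_withDensity_eq_lintegral_mul μ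
      (hwmeas F hF) (show Measurable fun a => f (-ψ a) from hfmeas.comp hnegψ)]
    refine lintegral_congr fun x => ?_
    have hx : T < -ψ x := by have := hψ x; linarith
    have hc0 : ENNReal.ofReal (c (-ψ x)) ≠ 0 := by
      simpa using (ENNReal.ofReal_pos.mpr (hc_pos _ hx)).ne'
    have hcT : ENNReal.ofReal (c (-ψ x)) ≠ ⊤ := ENNReal.ofReal_ne_top
    simp only [Pi.mul_apply, Function.comp_apply, hw, hf]
    rw [mul_comm (F x * ENNReal.ofReal (c (-ψ x))), mul_comm (F x), ← mul_assoc,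
      ENNReal.div_mul_cancel hc0 hcT, mul_comm]
  calc ∫⁻ x, G x * ENNReal.ofReal (ctilde (-ψ x)) ∂μ = ∫⁻ s, f s ∂(m G) :=
        (hlint G hG).symm
    _ ≤ ∫⁻ s, f s ∂(m H) := lintegral_mono' hle le_rfl
    _ = ∫⁻ x, H x * ENNReal.ofReal (ctilde (-ψ x)) ∂μ := hlint H hH
end
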